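/- Let f(x) = min(x, 1), a non-negative concave function on [0,∞). There exist 3×3 real positive semidefinite matrices B and Δ such that ‖f(B + Δ) − f(B)‖ > ‖f(Δ)‖, where ‖·‖ is the operator norm. In particular, the inequality ‖f(B + Δ) − f(B)‖ ≤ ‖f(Δ)‖ does not hold for all positive semidefinite B, Δ and all non-negative concave f on [0,∞). -/

import Mathlib

open Matrix
open scoped ComplexOrder

/-- The eigenvalues of a square matrix, sorted in non-increasing order
(junk value `0` if the matrix is not Hermitian). -/
noncomputable def eigValsDown {𝕜 : Type*} [RCLike 𝕜] {n : ℕ}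
    (A : Matrix (Fin n) (Fin n) 𝕜) : Fin n → ℝ :=
  if hA : A.IsHermitian then
    fun k => (hA.eigenvalues ∘ Tuple.sort hA.eigenvalues) k.rev
  else 0

/-- Functional calculus: apply a real function to a Hermitian matrix via its spectral
decomposition (junk value `0` if the matrix is not Hermitian). -/
noncomputable def matFun {𝕜 : Type*} [RCLike 𝕜] {n : ℕ} (h : ℝ → ℝ)
    (A : Matrix (Fin n) (Fin n) 𝕜) : Matrix (Fin n) (Fin n) 𝕜 :=
  if hA : A.IsHermitian then
    (hA.eigenvectorUnitary : Matrix (Fin n) (Fin n) 𝕜) *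
      Matrix.diagonal (fun i => (h (hA.eigenvalues i) : 𝕜)) *
      star (hA.eigenvectorUnitary : Matrix (Fin n) (Fin n) 𝕜)
  else 0

/-- The operator norm (largest singular value) of a matrix. -/
noncomputable def opNorm {𝕜 : Type*} [RCLike 𝕜] {n : ℕ}
    (A : Matrix (Fin n) (Fin n) 𝕜) : ℝ :=
  ‖Matrix.toEuclideanCLM (𝕜 := 𝕜) A‖

/-- The matrix absolute value `|M| = (Mᴴ M)^(1/2)`. -/
noncomputable def matAbs {𝕜 : Type*} [RCLike 𝕜] {n : ℕ}
    (A : Matrix (Fin n) (Fin n) 𝕜) : Matrix (Fin n) (Fin n) 𝕜 :=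
  ((Matrix.posSemidef_conjTranspose_mul_self A).1.eigenvectorUnitary : Matrix (Fin n) (Fin n) 𝕜) *
    Matrix.diagonal ((↑) ∘ (fun x : ℝ => Real.sqrt x) ∘
      (Matrix.posSemidef_conjTranspose_mul_self A).1.eigenvalues) *
    (star (Matrix.posSemidef_conjTranspose_mul_self A).1.eigenvectorUnitary : Matrix (Fin n) (Fin n) 𝕜)

/-- The Ky Fan `k`-norm: the sum of the `k` largest singular values. -/
noncomputable def kyFanNorm {𝕜 : Type*} [RCLike 𝕜] {n : ℕ} (k : ℕ)
    (A : Matrix (Fin n) (Fin n) 𝕜) : ℝ :=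
  ∑ j ∈ Finset.univ.filter (fun j : Fin n => (j : ℕ) < k), eigValsDown (matAbs A) j

/-! On a three-point set `{a, b, c}` with `a, b ≤ 1 ≤ c`, the function `f x = min x 1` agrees with
the Lagrange quadratic `x - (c - 1) (x - a) (x - b) / ((c - a) (c - b))`, so `f(A)` is that
quadratic in `A` whenever `σ(A) ⊆ {a, b, c}`. Take `B` diagonal with spectrum
`{1/2000, 4099/5000, 5973/5000}` and `Δ ⪰ 0` such that `B + Δ` has the rational spectrum
`{47/250, 1, 13183/10000}`. Then `‖Δ‖ ≤ 0.247 < 1`, so `f(Δ) = Δ`, while the vector `(1, 4, 3)`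
is stretched by more than `0.247` by `f(B + Δ) - f(B)`. -/

section FunctionalCalculus

variable {𝕜 : Type*} [RCLike 𝕜] {n : ℕ} {A : Matrix (Fin n) (Fin n) 𝕜}

theorem matFun_eq_cfc (hA : A.IsHermitian) (h : ℝ → ℝ) : matFun h A = cfc h A := by
  rw [matFun, dif_pos hA, hA.cfc_eq, IsHermitian.cfc, Unitary.conjStarAlgAut_apply]
  rfl

theorem matFun_min_one_of_spectrum_le (hA : A.IsHermitian) (h : ∀ x ∈ spectrum ℝ A, x ≤ 1) :
    matFun (fun x => min x 1) A = A := by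
  rw [matFun_eq_cfc hA]
  exact (cfc_congr fun x hx => min_eq_left (h x hx)).trans (cfc_id ℝ A hA)

theorem matFun_min_one_of_spectrum_subset (hA : A.IsHermitian) {a b c : ℝ}
    (hσ : spectrum ℝ A ⊆ {a, b, c}) (ha : a ≤ 1) (hb : b ≤ 1) (hc : 1 ≤ c) (hac : a ≠ c)
    (hbc : b ≠ c) :
    matFun (fun x => min x 1) A =
      A - ((c - 1) / ((c - a) * (c - b))) • ((A - a • 1) * (A - b • 1)) := by
  have hq : Set.EqOn (fun x => min x 1)
      (fun x => x - (c - 1) / ((c - a) * (c - b)) * ((x - a) * (x - b))) (spectrum ℝ A) := by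
    intro x hx
    rcases hσ hx with rfl | rfl | rfl
    · simp [ha]
    · simp [hb]
    · have : (x - a) * (x - b) ≠ 0 :=
        mul_ne_zero (sub_ne_zero.2 hac.symm) (sub_ne_zero.2 hbc.symm)
      field_simp
      simp [hc]
  rw [matFun_eq_cfc hA, cfc_congr hq, cfc_sub _ _ A, cfc_id' ℝ A, cfc_const_mul _ _ A,
    cfc_mul _ _ A, cfc_sub _ _ A, cfc_sub _ _ A, cfc_id' ℝ A, cfc_const _ A, cfc_const _ A,
    Algebra.algebraMap_eq_smul_one, Algebra.algebraMap_eq_smul_one]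

end FunctionalCalculus

section Norms

variable {n : ℕ} {A : Matrix (Fin n) (Fin n) ℝ}

theorem abs_le_opNorm_of_mem_spectrum {x : ℝ} (hx : x ∈ spectrum ℝ A) : |x| ≤ opNorm A := by
  rw [← AlgEquiv.spectrum_eq (Matrix.toEuclideanCLM (n := Fin n) (𝕜 := ℝ)) A] at hx
  have := Metric.mem_closedBall.1 (spectrum.subset_closedBall_norm_mul _ hx)
  rw [dist_zero_right, Real.norm_eq_abs] at this
  exact this.trans (mul_le_of_le_one_right (norm_nonneg _) ContinuousLinearMap.norm_id_le)

theorem opNorm_le_of_sum_sq_le {c : ℝ} (hc : 0 ≤ c)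
    (h : ∀ x : Fin n → ℝ, ∑ i, (A *ᵥ x) i ^ 2 ≤ c ^ 2 * ∑ i, x i ^ 2) : opNorm A ≤ c := by
  refine ContinuousLinearMap.opNorm_le_bound _ hc fun x => ?_
  rw [← pow_le_pow_iff_left₀ (norm_nonneg _) (by positivity) two_ne_zero, mul_pow,
    EuclideanSpace.real_norm_sq_eq, EuclideanSpace.real_norm_sq_eq]
  exact h x

theorem lt_opNorm_of_sum_sq_lt {c : ℝ} (x : Fin n → ℝ)
    (h : c ^ 2 * ∑ i, x i ^ 2 < ∑ i, (A *ᵥ x) i ^ 2) : c < opNorm A := by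
  by_contra! hA
  have hle := (Matrix.toEuclideanCLM (𝕜 := ℝ) A).le_opNorm (WithLp.toLp 2 x)
  rw [← pow_le_pow_iff_left₀ (norm_nonneg _) (by positivity) two_ne_zero, mul_pow,
    EuclideanSpace.real_norm_sq_eq, EuclideanSpace.real_norm_sq_eq] at hle
  have hA2 : opNorm A ^ 2 ≤ c ^ 2 := pow_le_pow_left₀ (norm_nonneg _) hA 2
  exact h.not_ge (hle.trans (mul_le_mul_of_nonneg_right hA2 (by positivity)))

end Norms

theorem spectrum_subset_of_det_eq {K : Type*} [Field K] {n : ℕ} {A : Matrix (Fin n) (Fin n) K}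
    {a b c : K} (h : ∀ x : K, (x • 1 - A).det = (x - a) * (x - b) * (x - c)) :
    spectrum K A ⊆ {a, b, c} := by
  intro x hx
  rw [mem_spectrum_iff_isRoot_charpoly, Polynomial.IsRoot, eval_charpoly, scalar_apply,
    ← smul_one_eq_diagonal, h] at hx
  simpa [sub_eq_zero, or_assoc] using hx

namespace MinOneCounterexample

noncomputable def B : Matrix (Fin 3) (Fin 3) ℝ := diagonal ![5973/5000, 1/2000, 4099/5000]

noncomputable def S : Matrix (Fin 3) (Fin 3) ℝ :=
  !![25422249314521207/19703371939690000, 826770453616107/9851685969845000,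
      -828703101303189/9851685969845000;
    826770453616107/9851685969845000, 974936525339627/4925842984922500,
      234190963121451/4925842984922500;
    -828703101303189/9851685969845000, 234190963121451/4925842984922500,
      5015141419141333/4925842984922500]

noncomputable def Δ : Matrix (Fin 3) (Fin 3) ℝ := S - B

theorem isHermitian_B : B.IsHermitian :=
  isHermitian_diagonal _

theorem isHermitian_S : S.IsHermitian := by
  ext i j
  fin_cases i <;> fin_cases j <;> simp [S]

theorem posSemidef_B : B.PosSemidef :=
  .diagonal fun i => by fin_cases i <;> norm_num

theorem posSemidef_Δ : Δ.PosSemidef := by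
  refine .of_dotProduct_mulVec_nonneg (isHermitian_S.sub isHermitian_B) fun x => ?_
  simp only [dotProduct, Pi.star_apply, star_trivial, mulVec, Δ, S, B, one_div, Matrix.sub_apply,
    of_apply, cons_val', cons_val_fin_one, Fin.sum_univ_three, Fin.isValue, cons_val_zero,
    cons_val_one, cons_val, diagonal_apply_eq, ne_eq, zero_ne_one, not_false_eq_true,
    diagonal_apply_ne, sub_zero, Fin.reduceEq, one_ne_zero]
  -- LDLᵀ factorisation of `Δ`
  nlinarith [sq_nonneg (x 0 + 1653540907232214/1884601195367533 * x 1
      - 1657406202606378/1884601195367533 * x 2),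
    sq_nonneg (x 1 + 762308645422780232/777650672733355069 * x 2), sq_nonneg (x 2)]

theorem opNorm_Δ_le : opNorm Δ ≤ 247/1000 := by
  refine opNorm_le_of_sum_sq_le (by norm_num) fun x => ?_
  simp only [mulVec, dotProduct, Δ, S, B, one_div, Matrix.sub_apply, of_apply, cons_val',
    cons_val_fin_one, Fin.sum_univ_three, Fin.isValue, cons_val_zero, cons_val_one, cons_val,
    diagonal_apply_eq, ne_eq, zero_ne_one, not_false_eq_true, diagonal_apply_ne, sub_zero,
    Fin.reduceEq, one_ne_zero]
  -- LDLᵀ factorisation of `(247/1000)² - Δ²`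
  nlinarith [sq_nonneg (x 0 - 450896679907549792/826264342872171211 * x 1
      + 6219556104704166/11318689628385907 * x 2),
    sq_nonneg (x 1 - 10203773854661440434017816139671808/34671734006971280750836125598419955 * x 2),
    sq_nonneg (x 2)]

theorem spectrum_B : spectrum ℝ B ⊆ {1/2000, 4099/5000, 5973/5000} := by
  rw [B, spectrum_diagonal]
  rintro _ ⟨i, rfl⟩
  fin_cases i <;> simp

theorem spectrum_S : spectrum ℝ S ⊆ {47/250, 1, 13183/10000} := by
  refine spectrum_subset_of_det_eq fun x => ?_
  rw [det_fin_three]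
  simp only [S, Fin.isValue, Matrix.sub_apply, Matrix.smul_apply, one_apply_eq, smul_eq_mul,
    mul_one, of_apply, cons_val', cons_val_zero, cons_val_fin_one, cons_val_one, cons_val, ne_eq,
    Fin.reduceEq, not_false_eq_true, one_apply_ne, mul_zero, zero_sub, mul_neg, neg_mul, neg_neg,
    zero_ne_one, one_ne_zero]
  ring

theorem matFun_Δ : matFun (fun x => min x 1) Δ = Δ :=
  matFun_min_one_of_spectrum_le (isHermitian_S.sub isHermitian_B) fun x hx =>
    calc x ≤ |x| := le_abs_self x
      _ ≤ opNorm Δ := abs_le_opNorm_of_mem_spectrum hx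
      _ ≤ 1 := opNorm_Δ_le.trans (by norm_num)

theorem lt_opNorm_matFun_S_sub_matFun_B :
    247/1000 < opNorm (matFun (fun x => min x 1) S - matFun (fun x => min x 1) B) := by
  rw [matFun_min_one_of_spectrum_subset isHermitian_S spectrum_S (by norm_num) (by norm_num)
      (by norm_num) (by norm_num) (by norm_num),
    matFun_min_one_of_spectrum_subset isHermitian_B spectrum_B (by norm_num) (by norm_num)
      (by norm_num) (by norm_num) (by norm_num)]
  refine lt_opNorm_of_sum_sq_lt ![1, 4, 3] ?_
  simp only [Fin.sum_univ_three, Fin.isValue, cons_val_zero, one_pow, cons_val_one, cons_val,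
    mulVec, dotProduct, S, one_smul, B, one_div, Matrix.sub_apply, of_apply, cons_val',
    cons_val_fin_one, Matrix.smul_apply, mul_apply, one_apply, smul_eq_mul, mul_ite, mul_one,
    mul_zero, diagonal_apply, sub_self, add_zero, ↓reduceIte, one_ne_zero, sub_zero, Fin.reduceEq,
    zero_ne_one, zero_add, zero_mul]
  norm_num

end MinOneCounterexample

open MinOneCounterexample in
/-- with `f(x) = min(x, 1)`, there exist `3×3` real PSD matrices `B`, `Δ`
with `‖f(B + Δ) - f(B)‖ > ‖f(Δ)‖` in operator norm. -/
theorem stmt4 :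
    ∃ B Δ : Matrix (Fin 3) (Fin 3) ℝ, B.PosSemidef ∧ Δ.PosSemidef ∧
      opNorm (matFun (fun x => min x 1) Δ) <
        opNorm (matFun (fun x => min x 1) (B + Δ) - matFun (fun x => min x 1) B) := by
  refine ⟨B, Δ, posSemidef_B, posSemidef_Δ, ?_⟩
  rw [matFun_Δ, Δ, add_sub_cancel]
  exact opNorm_Δ_le.trans_lt lt_opNorm_matFun_S_sub_matFun_B
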